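/- Let K be irreducible, aperiodic, substochastic on countable S with convergence norm ρ = 1/R. If Yaglom limits π_x exist for all x ∈ S and the Jacka–Roberts ratio ĥ(y) = lim_n K^n(y,S)/K^n(x₀,S) exists for all y, then the generalized strong ratio limit property holds: for all u,v,x,y ∈ S and all m ∈ ℤ, lim_n K^{n+m}(u,v)/K^n(x,y) = R^{-m} · (ĥ(u) π_u(v)) / (ĥ(x) π_x(y)). -/

import Mathlib

/-!
Write `σₙ(x) = K^n(x,S)`. Since `K^n(x,y) ≍ σₙ(x)` by the Yaglom limit, `σₙ(x)^{1/n} → ρ`; hence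
`σₙ₊₁(x) ≤ c σₙ(x)` infinitely often for every `c > ρ`, and along those times the Yaglom limits
give `π_x K ≤ ρ π_x`. With irreducibility this makes every `π_x` strictly positive and every row
of `K` summable. By Scheffé's lemma `K^{n+1}(x,y)/σₙ(x) → (π_x K)(y)`, so `σₙ₊₁(x)/σₙ(x)`
converges, and a ratio limit can only be the root limit `ρ`. Finally
`K^{n+k}(u,v)/K^n(x,y)` telescopes into
`K^{n+k}(u,v)/σₙ₊ₖ(u) · σₙ₊ₖ(u)/σₙ₊ₖ(x₀) · σₙ₊ₖ(x₀)/σₙ(x₀) · σₙ(x₀)/σₙ(x) · σₙ(x)/K^n(x,y)`,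
whose factors tend to `π_u(v)`, `ĥ(u)`, `ρ^k`, `1/ĥ(x)` and `1/π_x(y)`; negative shifts follow by
exchanging the two pairs of states.
-/

open Filter Topology

open scoped Classical in
/-- Matrix powers of a kernel `K` on a countable state space. -/
noncomputable def Kpow {S : Type*} (K : S → S → ℝ) : ℕ → S → S → ℝ
  | 0 => fun x y => if x = y then 1 else 0
  | n + 1 => fun x y => ∑' z, Kpow K n x z * K z y

section RootsAndRatios

variable {b : ℕ → ℝ} {ρ c : ℝ}

lemma tendsto_rpow_inv_natCast_one {C : ℝ} (hC : 0 < C) :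
    Tendsto (fun n : ℕ => C ^ (n : ℝ)⁻¹) atTop (𝓝 1) := by
  have h0 : Tendsto (fun n : ℕ => (n : ℝ)⁻¹) atTop (𝓝 0) :=
    tendsto_inv_atTop_zero.comp tendsto_natCast_atTop_atTop
  simpa [Function.comp_def] using (Real.continuousAt_const_rpow (b := 0) hC.ne').tendsto.comp h0

lemma tendsto_mul_pow_rpow_inv_natCast {D : ℝ} (hD : 0 < D) (hc : 0 ≤ c) :
    Tendsto (fun n : ℕ => (D * c ^ n) ^ (n : ℝ)⁻¹) atTop (𝓝 c) := by
  have h := (tendsto_rpow_inv_natCast_one hD).mul_const c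
  rw [one_mul] at h
  refine h.congr' ?_
  filter_upwards [eventually_ne_atTop 0] with n hn
  rw [Real.mul_rpow hD.le (pow_nonneg hc n), Real.pow_rpow_inv_natCast hc hn]

lemma eventually_pos_of_tendsto_rpow_inv (hb : ∀ n, 0 ≤ b n) (hρ : 0 < ρ)
    (hlim : Tendsto (fun n : ℕ => b n ^ (n : ℝ)⁻¹) atTop (𝓝 ρ)) : ∀ᶠ n in atTop, 0 < b n := by
  filter_upwards [hlim.eventually (eventually_gt_nhds hρ), eventually_ne_atTop 0] with n hpos hn
  refine (hb n).lt_of_ne fun hzero => ?_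
  rw [← hzero, Real.zero_rpow (inv_ne_zero (Nat.cast_ne_zero.mpr hn))] at hpos
  exact hpos.false

lemma tendsto_rpow_inv_of_le_of_le_mul {a : ℕ → ℝ} {C : ℝ} (ha : ∀ n, 0 ≤ a n) (hC : 0 < C)
    (hab : ∀ᶠ n in atTop, a n ≤ b n ∧ b n ≤ C * a n)
    (hlim : Tendsto (fun n : ℕ => a n ^ (n : ℝ)⁻¹) atTop (𝓝 ρ)) :
    Tendsto (fun n : ℕ => b n ^ (n : ℝ)⁻¹) atTop (𝓝 ρ) := by
  have hupper : Tendsto (fun n : ℕ => C ^ (n : ℝ)⁻¹ * a n ^ (n : ℝ)⁻¹) atTop (𝓝 ρ) := by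
    simpa using (tendsto_rpow_inv_natCast_one hC).mul hlim
  refine tendsto_of_tendsto_of_tendsto_of_le_of_le' hlim hupper ?_ ?_
  · exact hab.mono fun n h => Real.rpow_le_rpow (ha n) h.1 (by positivity)
  · refine hab.mono fun n h => ?_
    rw [← Real.mul_rpow hC.le (ha n)]
    exact Real.rpow_le_rpow ((ha n).trans h.1) h.2 (by positivity)

lemma le_of_eventually_succ_le_mul (hc : 0 < c)
    (hlim : Tendsto (fun n : ℕ => b n ^ (n : ℝ)⁻¹) atTop (𝓝 ρ))
    (hpos : ∀ᶠ n in atTop, 0 < b n) (hstep : ∀ᶠ n in atTop, b (n + 1) ≤ c * b n) : ρ ≤ c := by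
  obtain ⟨N, hN⟩ := eventually_atTop.mp (hpos.and hstep)
  have hD : 0 < b N / c ^ N := div_pos (hN N le_rfl).1 (pow_pos hc N)
  refine le_of_tendsto_of_tendsto hlim (tendsto_mul_pow_rpow_inv_natCast hD hc.le) ?_
  filter_upwards [eventually_ge_atTop N] with n hn
  obtain ⟨j, rfl⟩ := Nat.exists_eq_add_of_le hn
  have hgeom : b (N + j) ≤ c ^ j * b N :=
    le_geom (u := fun k => b (N + k)) hc.le j fun k _ => (hN (N + k) (by omega)).2
  refine Real.rpow_le_rpow (hN _ hn).1.le (hgeom.trans_eq ?_) (by positivity)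
  rw [pow_add]
  field_simp

lemma le_of_eventually_mul_le_succ (hc : 0 < c)
    (hlim : Tendsto (fun n : ℕ => b n ^ (n : ℝ)⁻¹) atTop (𝓝 ρ))
    (hpos : ∀ᶠ n in atTop, 0 < b n) (hstep : ∀ᶠ n in atTop, c * b n ≤ b (n + 1)) : c ≤ ρ := by
  obtain ⟨N, hN⟩ := eventually_atTop.mp (hpos.and hstep)
  have hD : 0 < b N / c ^ N := div_pos (hN N le_rfl).1 (pow_pos hc N)
  refine le_of_tendsto_of_tendsto (tendsto_mul_pow_rpow_inv_natCast hD hc.le) hlim ?_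
  filter_upwards [eventually_ge_atTop N] with n hn
  obtain ⟨j, rfl⟩ := Nat.exists_eq_add_of_le hn
  have hgeom : c ^ j * b N ≤ b (N + j) :=
    geom_le (u := fun k => b (N + k)) hc.le j fun k _ => (hN (N + k) (by omega)).2
  refine Real.rpow_le_rpow (by positivity) (hgeom.trans_eq' ?_) (by positivity)
  rw [pow_add]
  field_simp

lemma frequently_succ_le_mul_of_lt (hlim : Tendsto (fun n : ℕ => b n ^ (n : ℝ)⁻¹) atTop (𝓝 ρ))
    (hpos : ∀ᶠ n in atTop, 0 < b n) (hρc : ρ < c) : ∃ᶠ n in atTop, b (n + 1) ≤ c * b n := by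
  have hρ : 0 ≤ ρ := ge_of_tendsto hlim (hpos.mono fun n h => Real.rpow_nonneg h.le _)
  by_contra h
  rw [not_frequently] at h
  exact (le_of_eventually_mul_le_succ (hρ.trans_lt hρc) hlim hpos
    (h.mono fun _ hn => (not_le.mp hn).le)).not_gt hρc

lemma eq_of_tendsto_succ_div_of_tendsto_rpow_inv {l : ℝ}
    (hlim : Tendsto (fun n : ℕ => b n ^ (n : ℝ)⁻¹) atTop (𝓝 ρ)) (hpos : ∀ᶠ n in atTop, 0 < b n)
    (hratio : Tendsto (fun n => b (n + 1) / b n) atTop (𝓝 l)) : l = ρ := by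
  refine le_antisymm (le_of_forall_gt_imp_ge_of_dense fun c hc => ?_)
    (le_of_forall_gt_imp_ge_of_dense fun c hc => ?_)
  · refine le_of_tendsto_of_frequently hratio ?_
    refine ((frequently_succ_le_mul_of_lt hlim hpos hc).and_eventually hpos).mono ?_
    rintro n ⟨hle, hb⟩
    exact (div_le_iff₀ hb).mpr hle
  · have hl : 0 ≤ l := ge_of_tendsto hratio <|
      (hpos.and ((tendsto_add_atTop_nat 1).eventually hpos)).mono fun _ h =>
        div_nonneg h.2.le h.1.le
    refine le_of_eventually_succ_le_mul (hl.trans_lt hc) hlim hpos ?_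
    filter_upwards [hpos, hratio.eventually (eventually_lt_nhds hc)] with n hb h
    exact ((div_lt_iff₀ hb).mp h).le

lemma tendsto_add_div_of_tendsto_succ_div (hb : ∀ n, b n ≠ 0)
    (hratio : Tendsto (fun n => b (n + 1) / b n) atTop (𝓝 ρ)) (k : ℕ) :
    Tendsto (fun n => b (n + k) / b n) atTop (𝓝 (ρ ^ k)) := by
  induction k with
  | zero => simp [div_self (hb _)]
  | succ k ih =>
    rw [pow_succ']
    refine ((hratio.comp (tendsto_add_atTop_nat k)).mul ih).congr fun n => ?_
    simp only [Function.comp_apply, ← add_assoc]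
    field_simp [hb (n + k)]

lemma tendsto_toNat_add_div {ι : Type*} {F : ℕ → ι → ℝ} {L : ι → ℝ} (hρ : 0 < ρ)
    (hL : ∀ i, 0 < L i)
    (h : ∀ i j (k : ℕ), Tendsto (fun n => F (n + k) i / F n j) atTop (𝓝 (ρ ^ k * L i / L j)))
    (i j : ι) (m : ℤ) :
    Tendsto (fun n : ℕ => F ((n : ℤ) + m).toNat i / F n j) atTop (𝓝 (ρ ^ m * L i / L j)) := by
  obtain ⟨k, rfl | rfl⟩ := Int.eq_nat_or_neg m
  · have e : ∀ n : ℕ, ((n : ℤ) + k).toNat = n + k := fun n => by omega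
    simpa [e] using h i j k
  · have hlim := ((h j i k).inv₀ (div_pos (mul_pos (pow_pos hρ k) (hL j)) (hL i)).ne').comp
      (tendsto_sub_atTop_nat k)
    have e : (ρ ^ k * L j / L i)⁻¹ = ρ ^ (-(k : ℤ)) * L i / L j := by
      rw [zpow_neg, zpow_natCast]
      field_simp
    rw [← e]
    refine hlim.congr' ?_
    filter_upwards [eventually_ge_atTop k] with n hn
    have e1 : n - k + k = n := by omega
    have e2 : ((n : ℤ) + -(k : ℤ)).toNat = n - k := by omega
    simp only [Function.comp_apply, e1, e2, inv_div]

end RootsAndRatios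

section Summation

variable {ι : Type*}

lemma summable_of_tsum_ne_zero {f : ι → ℝ} (h : ∑' i, f i ≠ 0) : Summable f :=
  by_contra fun hf => h (tsum_eq_zero_of_not_summable hf)

lemma exists_pos_of_tsum_pos {f : ι → ℝ} (hf : ∀ i, 0 ≤ f i) (h : 0 < ∑' i, f i) :
    ∃ i, 0 < f i := by
  by_contra! hle
  simp [fun i => le_antisymm (hle i) (hf i)] at h

/-- Scheffé's lemma for probability vectors. -/
lemma tendsto_tsum_abs_sub_of_tendsto {α : Type*} {l : Filter α} {f : α → ι → ℝ} {p : ι → ℝ}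
    (hf : ∀ n i, 0 ≤ f n i) (hfs : ∀ n, Summable (f n)) (hf1 : ∀ n, ∑' i, f n i = 1)
    (hp0 : ∀ i, 0 ≤ p i) (hp : Summable p) (hp1 : ∑' i, p i = 1)
    (hlim : ∀ i, Tendsto (f · i) l (𝓝 (p i))) :
    Tendsto (fun n => ∑' i, |f n i - p i|) l (𝓝 0) := by
  -- `|f - p| = (f - p) + 2 (p - f)⁺`, the first part sums to `0` and the second is dominated by `p`
  have hneg : Tendsto (fun n => ∑' i, max (p i - f n i) 0) l (𝓝 0) := by
    have h := tendsto_tsum_of_dominated_convergence (f := fun n i => max (p i - f n i) 0)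
      (g := fun _ => 0) hp
      (fun i => by simpa using ((hlim i).const_sub (p i)).max (tendsto_const_nhds (x := (0 : ℝ))))
      (Eventually.of_forall fun n i => by
        rw [Real.norm_eq_abs, abs_of_nonneg (le_max_right _ _)]
        exact max_le (by linarith [hf n i]) (hp0 i))
    simpa using h
  have h2 := hneg.const_mul 2
  rw [mul_zero] at h2
  refine h2.congr fun n => ?_
  have hns : Summable fun i => max (p i - f n i) 0 :=
    .of_nonneg_of_le (fun i => le_max_right _ _)
      (fun i => max_le (by linarith [hf n i]) (hp0 i)) hp
  have hsplit : ∀ i, |f n i - p i| = (f n i - p i) + 2 * max (p i - f n i) 0 := fun i => by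
    rcases le_total (p i) (f n i) with h | h
    · rw [abs_of_nonneg (by linarith), max_eq_right (by linarith)]; ring
    · rw [abs_of_nonpos (by linarith), max_eq_left (by linarith)]; ring
  rw [tsum_congr hsplit, ((hfs n).sub hp).tsum_add (hns.mul_left 2), (hfs n).tsum_sub hp, hf1 n,
    hp1, tsum_mul_left, sub_self, zero_add]

lemma tendsto_tsum_mul_of_tendsto_tsum_abs_sub {α : Type*} {l : Filter α} {f : α → ι → ℝ}
    {p g : ι → ℝ} {C : ℝ} (hfs : ∀ n, Summable (f n)) (hp : Summable p) (hg : ∀ i, |g i| ≤ C)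
    (hlim : Tendsto (fun n => ∑' i, |f n i - p i|) l (𝓝 0)) :
    Tendsto (fun n => ∑' i, f n i * g i) l (𝓝 (∑' i, p i * g i)) := by
  have hmul : ∀ {q : ι → ℝ}, Summable q → Summable fun i => q i * g i := fun hq =>
    .of_norm_bounded (hq.abs.mul_right C) fun i => by
      rw [Real.norm_eq_abs, abs_mul]
      exact mul_le_mul_of_nonneg_left (hg i) (abs_nonneg _)
  rw [← tendsto_sub_nhds_zero_iff]
  refine squeeze_zero_norm (fun n => ?_) (by simpa using hlim.const_mul C)
  calc ‖∑' i, f n i * g i - ∑' i, p i * g i‖ = ‖∑' i, (f n i - p i) * g i‖ := by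
        rw [← (hmul (hfs n)).tsum_sub (hmul hp)]; simp only [sub_mul]
    _ ≤ ∑' i, |f n i - p i| * C := by
        refine tsum_of_norm_bounded (((hfs n).sub hp).abs.mul_right C).hasSum fun i => ?_
        rw [Real.norm_eq_abs, abs_mul]
        exact mul_le_mul_of_nonneg_left (hg i) (abs_nonneg _)
    _ = C * ∑' i, |f n i - p i| := by rw [tsum_mul_right, mul_comm]

end Summation

/-- `K^n(x, S)`. -/
noncomputable def survivalProb {S : Type*} (K : S → S → ℝ) (n : ℕ) (x : S) : ℝ :=
  ∑' y, Kpow K n x y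

def IsSubinvariant {S : Type*} (K : S → S → ℝ) (ρ : ℝ) (μ : S → ℝ) : Prop :=
  ∀ v y, μ v * K v y ≤ ρ * μ y

/-- `summable` is not implied by `tsum_le_one`: the `tsum` of a non-summable family is `0`. -/
structure IsSubstochastic {S : Type*} (K : S → S → ℝ) : Prop where
  nonneg : ∀ x y, 0 ≤ K x y
  summable : ∀ x, Summable (K x)
  tsum_le_one : ∀ x, ∑' y, K x y ≤ 1

section Kernel

variable {S : Type*} {K : S → S → ℝ} {ρ : ℝ}

lemma Kpow_zero_self (x : S) : Kpow K 0 x x = 1 := by simp [Kpow]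

lemma Kpow_zero_of_ne {x y : S} (h : x ≠ y) : Kpow K 0 x y = 0 := by simp [Kpow, h]

lemma Kpow_succ_apply (n : ℕ) (x y : S) : Kpow K (n + 1) x y = ∑' z, Kpow K n x z * K z y := rfl

lemma Kpow_nonneg (hK : ∀ x y, 0 ≤ K x y) : ∀ n (x y : S), 0 ≤ Kpow K n x y
  | 0, x, y => by
    by_cases h : x = y
    · simp [h, Kpow_zero_self]
    · simp [Kpow_zero_of_ne h]
  | n + 1, x, y => tsum_nonneg fun z => mul_nonneg (Kpow_nonneg hK n x z) (hK z y)

lemma survivalProb_nonneg (hK : ∀ x y, 0 ≤ K x y) (n : ℕ) (x : S) : 0 ≤ survivalProb K n x :=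
  tsum_nonneg (Kpow_nonneg hK n x)

lemma summable_Kpow_of_survivalProb_pos {n : ℕ} {x : S} (h : 0 < survivalProb K n x) :
    Summable (Kpow K n x) :=
  summable_of_tsum_ne_zero h.ne'

lemma IsSubinvariant.pos_of_Kpow_pos (hK : ∀ x y, 0 ≤ K x y) {μ : S → ℝ} (hρ : 0 < ρ)
    (hμ : IsSubinvariant K ρ μ) {v : S} (hv : 0 < μ v) :
    ∀ {n : ℕ} {y : S}, 0 < Kpow K n v y → 0 < μ y
  | 0, y, hn => by
    by_cases h : v = y
    · rwa [← h]
    · simp [Kpow_zero_of_ne h] at hn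
  | n + 1, y, hn => by
    obtain ⟨w, hw⟩ :=
      exists_pos_of_tsum_pos (fun w => mul_nonneg (Kpow_nonneg hK n v w) (hK w y)) hn
    have hμw : 0 < μ w := hμ.pos_of_Kpow_pos hK hρ hv (pos_of_mul_pos_left hw (hK w y))
    have hwy := pos_of_mul_pos_right hw (Kpow_nonneg hK n v w)
    exact pos_of_mul_pos_right ((mul_pos hμw hwy).trans_le (hμ w y)) hρ.le

lemma IsSubinvariant.summable (hK : ∀ x y, 0 ≤ K x y) {μ : S → ℝ} (hρ : 0 ≤ ρ)
    (hμ : IsSubinvariant K ρ μ) (hμ0 : ∀ y, 0 ≤ μ y) (hμs : Summable μ) {v : S} (hv : 0 < μ v) :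
    Summable (K v) := by
  refine summable_of_sum_le (c := ρ * (∑' y, μ y) / μ v) (hK v) fun F => ?_
  rw [le_div_iff₀' hv, Finset.mul_sum]
  calc ∑ y ∈ F, μ v * K v y ≤ ∑ y ∈ F, ρ * μ y := Finset.sum_le_sum fun y _ => hμ v y
    _ = ρ * ∑ y ∈ F, μ y := by rw [Finset.mul_sum]
    _ ≤ ρ * ∑' y, μ y := by gcongr; exact hμs.sum_le_tsum F fun y _ => hμ0 y

namespace IsSubstochastic

lemma le_one (hK : IsSubstochastic K) (x y : S) : K x y ≤ 1 :=
  (hK.summable x |>.le_tsum y fun z _ => hK.nonneg x z).trans (hK.tsum_le_one x)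

lemma summable_mul_apply (hK : IsSubstochastic K) {f : S → ℝ} (hf0 : ∀ w, 0 ≤ f w)
    (hf : Summable f) (y : S) : Summable fun w => f w * K w y :=
  .of_nonneg_of_le (fun w => mul_nonneg (hf0 w) (hK.nonneg w y))
    (fun w => mul_le_of_le_one_right (hf0 w) (hK.le_one w y)) hf

lemma sum_Kpow_succ_le (hK : IsSubstochastic K) {n : ℕ} {x : S} (hs : Summable (Kpow K n x))
    (F : Finset S) : ∑ y ∈ F, Kpow K (n + 1) x y ≤ survivalProb K n x := by
  have hK0 := Kpow_nonneg hK.nonneg n x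
  have hrow : ∀ w, ∑ y ∈ F, Kpow K n x w * K w y ≤ Kpow K n x w := fun w => by
    rw [← Finset.mul_sum]
    exact mul_le_of_le_one_right (hK0 w)
      (((hK.summable w).sum_le_tsum F fun y _ => hK.nonneg w y).trans (hK.tsum_le_one w))
  calc ∑ y ∈ F, Kpow K (n + 1) x y = ∑' w, ∑ y ∈ F, Kpow K n x w * K w y :=
        (Summable.tsum_finsetSum fun y _ => hK.summable_mul_apply hK0 hs y).symm
    _ ≤ survivalProb K n x :=
        Summable.tsum_le_tsum hrow (.of_nonneg_of_le (fun w => Finset.sum_nonneg fun y _ =>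
          mul_nonneg (hK0 w) (hK.nonneg w y)) hrow hs) hs

lemma summable_Kpow (hK : IsSubstochastic K) : ∀ n (x : S), Summable (Kpow K n x)
  | 0, x => summable_of_ne_finset_zero (s := {x}) fun _ hy =>
      Kpow_zero_of_ne (Ne.symm (Finset.notMem_singleton.mp hy))
  | n + 1, x => summable_of_sum_le (Kpow_nonneg hK.nonneg (n + 1) x)
      (hK.sum_Kpow_succ_le (hK.summable_Kpow n x))

lemma survivalProb_succ_le (hK : IsSubstochastic K) (n : ℕ) (x : S) :
    survivalProb K (n + 1) x ≤ survivalProb K n x :=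
  (hK.summable_Kpow (n + 1) x).tsum_le_of_sum_le (hK.sum_Kpow_succ_le (hK.summable_Kpow n x))

lemma survivalProb_antitone (hK : IsSubstochastic K) (x : S) :
    Antitone (survivalProb K · x) :=
  antitone_nat_of_succ_le fun n => hK.survivalProb_succ_le n x

lemma survivalProb_pos (hK : IsSubstochastic K) {x : S}
    (h : ∀ᶠ n in atTop, 0 < survivalProb K n x) (n : ℕ) : 0 < survivalProb K n x := by
  obtain ⟨N, hN⟩ := eventually_atTop.mp h
  exact (hN (max n N) (le_max_right n N)).trans_le (hK.survivalProb_antitone x (le_max_left n N))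

lemma Kpow_mul_Kpow_le (hK : IsSubstochastic K) (a : ℕ) (x z : S) :
    ∀ b (y : S), Kpow K a x z * Kpow K b z y ≤ Kpow K (a + b) x y
  | 0, y => by
    by_cases h : z = y
    · simp [h, Kpow_zero_self]
    · simpa [Kpow_zero_of_ne h] using Kpow_nonneg hK.nonneg a x y
  | b + 1, y => by
    have hK0 := Kpow_nonneg hK.nonneg
    have hstep : ∀ w, Kpow K a x z * (Kpow K b z w * K w y) ≤ Kpow K (a + b) x w * K w y :=
      fun w => by
        rw [← mul_assoc]
        exact mul_le_mul_of_nonneg_right (hK.Kpow_mul_Kpow_le a x z b w) (hK.nonneg w y)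
    have hs := hK.summable_mul_apply (hK0 _ x) (hK.summable_Kpow (a + b) x) y
    rw [Kpow_succ_apply, ← tsum_mul_left, ← add_assoc, Kpow_succ_apply]
    exact Summable.tsum_le_tsum hstep (.of_nonneg_of_le (fun w => mul_nonneg (hK0 a x z)
      (mul_nonneg (hK0 b z w) (hK.nonneg w y))) hstep hs) hs

lemma Kpow_mul_survivalProb_le (hK : IsSubstochastic K) (k n : ℕ) (x z : S) :
    Kpow K k x z * survivalProb K n z ≤ survivalProb K (k + n) x := by
  rw [survivalProb, ← tsum_mul_left]
  exact Summable.tsum_le_tsum (hK.Kpow_mul_Kpow_le k x z n)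
    ((hK.summable_Kpow n z).mul_left _) (hK.summable_Kpow (k + n) x)

lemma Kpow_le_of_tendsto_survivalProb_div (hK : IsSubstochastic K) {x z : S} {c : ℝ}
    (hz : ∀ n, 0 < survivalProb K n z)
    (hlim : Tendsto (fun n => survivalProb K n x / survivalProb K n z) atTop (𝓝 c)) (k : ℕ) :
    Kpow K k x z ≤ c := by
  refine ge_of_tendsto (hlim.comp (tendsto_add_atTop_nat k)) (Eventually.of_forall fun n => ?_)
  rw [Function.comp_apply, le_div_iff₀ (hz _), add_comm n k]
  calc Kpow K k x z * survivalProb K (k + n) z ≤ Kpow K k x z * survivalProb K n z :=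
        mul_le_mul_of_nonneg_left (hK.survivalProb_antitone z (by omega))
          (Kpow_nonneg hK.nonneg k x z)
    _ ≤ survivalProb K (k + n) x := hK.Kpow_mul_survivalProb_le k n x z

end IsSubstochastic

lemma eventually_pos_of_tendsto_Kpow_div (hK : ∀ x y, 0 ≤ K x y) {x y : S} {p : ℝ} (hp : p ≠ 0)
    (hlim : Tendsto (fun n => Kpow K n x y / survivalProb K n x) atTop (𝓝 p)) :
    ∀ᶠ n in atTop, 0 < Kpow K n x y ∧ 0 < survivalProb K n x := by
  filter_upwards [hlim.eventually_ne hp] with n hn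
  rw [div_ne_zero_iff] at hn
  exact ⟨(Kpow_nonneg hK n x y).lt_of_ne' hn.1, (survivalProb_nonneg hK n x).lt_of_ne' hn.2⟩

lemma tendsto_survivalProb_rpow_inv (hK : ∀ x y, 0 ≤ K x y) {x y : S} {p : ℝ} (hp : 0 < p)
    (hlim : Tendsto (fun n => Kpow K n x y / survivalProb K n x) atTop (𝓝 p))
    (hroot : Tendsto (fun n : ℕ => Kpow K n x y ^ (n : ℝ)⁻¹) atTop (𝓝 ρ)) :
    Tendsto (fun n : ℕ => survivalProb K n x ^ (n : ℝ)⁻¹) atTop (𝓝 ρ) := by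
  refine tendsto_rpow_inv_of_le_of_le_mul (C := 2 / p) (Kpow_nonneg hK · x y) (by positivity) ?_
    hroot
  filter_upwards [eventually_pos_of_tendsto_Kpow_div hK hp.ne' hlim,
    hlim.eventually (eventually_gt_nhds (half_lt_self hp))] with n hpos hhalf
  have hσ := hpos.2
  refine ⟨(summable_Kpow_of_survivalProb_pos hσ).le_tsum y fun z _ => Kpow_nonneg hK n x z, ?_⟩
  rw [lt_div_iff₀ hσ] at hhalf
  rw [div_mul_eq_mul_div, le_div_iff₀ hp]
  linarith

/-- Along the times where `K^{n+1}(x,S) ≤ c K^n(x,S)`, which occur infinitely often for every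
`c > ρ`, one has `K^n(x,v)/K^n(x,S) * K(v,y) ≤ c K^{n+1}(x,y)/K^{n+1}(x,S)`. -/
lemma isSubinvariant_of_tendsto_Kpow_div (hK : ∀ x y, 0 ≤ K x y) {x : S} {μ : S → ℝ}
    (hσ : ∀ᶠ n in atTop, 0 < survivalProb K n x)
    (hroot : Tendsto (fun n : ℕ => survivalProb K n x ^ (n : ℝ)⁻¹) atTop (𝓝 ρ))
    (hKpos : ∀ y, ∀ᶠ n in atTop, 0 < Kpow K n x y)
    (hlim : ∀ y, Tendsto (fun n => Kpow K n x y / survivalProb K n x) atTop (𝓝 (μ y))) :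
    IsSubinvariant K ρ μ := by
  intro v y
  have hc : ∀ c, ρ < c → μ v * K v y ≤ c * μ y := fun c hc => by
    have hshift : ∀ {P : ℕ → Prop}, (∀ᶠ n in atTop, P n) → ∀ᶠ n in atTop, P (n + 1) :=
      (tendsto_add_atTop_nat 1).eventually
    refine le_of_tendsto_of_tendsto_of_frequently ((hlim v).mul_const (K v y))
      (((hlim y).comp (tendsto_add_atTop_nat 1)).const_mul c) ?_
    refine ((frequently_succ_le_mul_of_lt hroot hσ hc).and_eventually
      ((hσ.and (hshift hσ)).and (hshift (hKpos y)))).mono ?_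
    rintro n ⟨hstep, ⟨hσn, hσn1⟩, hKn1⟩
    have hterm : Kpow K n x v * K v y ≤ Kpow K (n + 1) x y :=
      (summable_of_tsum_ne_zero hKn1.ne').le_tsum v fun w _ =>
        mul_nonneg (Kpow_nonneg hK n x w) (hK w y)
    simp only [Function.comp_apply]
    rw [div_mul_eq_mul_div, div_le_iff₀ hσn, mul_div_assoc', div_mul_eq_mul_div, le_div_iff₀ hσn1]
    calc Kpow K n x v * K v y * survivalProb K (n + 1) x
        ≤ Kpow K (n + 1) x y * (c * survivalProb K n x) :=
          mul_le_mul hterm hstep (survivalProb_nonneg hK _ x) (Kpow_nonneg hK _ x y)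
      _ = c * Kpow K (n + 1) x y * survivalProb K n x := by ring
  exact ge_of_tendsto (((continuous_mul_const (μ y)).tendsto ρ).mono_left nhdsWithin_le_nhds)
    (eventually_nhdsWithin_of_forall (s := Set.Ioi ρ) hc)

lemma IsSubstochastic.tendsto_Kpow_succ_div_survivalProb (hK : IsSubstochastic K) {x : S}
    {μ : S → ℝ} (hσ : ∀ n, 0 < survivalProb K n x) (hμ0 : ∀ y, 0 ≤ μ y) (hμ1 : ∑' y, μ y = 1)
    (hlim : ∀ y, Tendsto (fun n => Kpow K n x y / survivalProb K n x) atTop (𝓝 (μ y))) (y : S) :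
    Tendsto (fun n => Kpow K (n + 1) x y / survivalProb K n x) atTop
      (𝓝 (∑' v, μ v * K v y)) := by
  have hμs : Summable μ := summable_of_tsum_ne_zero (hμ1 ▸ one_ne_zero)
  have hfs : ∀ n, Summable fun v => Kpow K n x v / survivalProb K n x :=
    fun n => (hK.summable_Kpow n x).div_const _
  have hL1 := tendsto_tsum_abs_sub_of_tendsto
    (fun n v => div_nonneg (Kpow_nonneg hK.nonneg n x v) (hσ n).le) hfs
    (fun n => by rw [tsum_div_const]; exact div_self (hσ n).ne') hμ0 hμs hμ1 hlim
  refine (tendsto_tsum_mul_of_tendsto_tsum_abs_sub (g := (K · y)) hfs hμs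
    (fun v => (abs_of_nonneg (hK.nonneg v y)).trans_le (hK.le_one v y)) hL1).congr fun n => ?_
  rw [Kpow_succ_apply, ← tsum_div_const]
  exact tsum_congr fun v => div_mul_eq_mul_div _ _ _

lemma IsSubstochastic.tendsto_survivalProb_succ_div (hK : IsSubstochastic K) {x y : S}
    {μ : S → ℝ} (hσ : ∀ n, 0 < survivalProb K n x)
    (hroot : Tendsto (fun n : ℕ => survivalProb K n x ^ (n : ℝ)⁻¹) atTop (𝓝 ρ))
    (hμ0 : ∀ y, 0 ≤ μ y) (hμ1 : ∑' y, μ y = 1)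
    (hlim : ∀ y, Tendsto (fun n => Kpow K n x y / survivalProb K n x) atTop (𝓝 (μ y)))
    (hy : 0 < μ y) :
    Tendsto (fun n => survivalProb K (n + 1) x / survivalProb K n x) atTop (𝓝 ρ) := by
  have hnum := hK.tendsto_Kpow_succ_div_survivalProb hσ hμ0 hμ1 hlim y
  have hden := (hlim y).comp (tendsto_add_atTop_nat 1)
  have hratio : Tendsto (fun n => survivalProb K (n + 1) x / survivalProb K n x) atTop
      (𝓝 ((∑' v, μ v * K v y) / μ y)) := by
    refine (hnum.div hden hy.ne').congr' ?_
    filter_upwards [(tendsto_add_atTop_nat 1).eventually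
      (eventually_pos_of_tendsto_Kpow_div hK.nonneg hy.ne' (hlim y))] with n hn
    simp only [Pi.div_apply, Function.comp_apply]
    field_simp [hn.1.ne', hn.2.ne', (hσ n).ne']
  rwa [eq_of_tendsto_succ_div_of_tendsto_rpow_inv hroot (.of_forall hσ) hratio] at hratio

lemma tendsto_Kpow_add_div_Kpow {π : S → S → ℝ} {h : S → ℝ} {x₀ : S}
    (hσ : ∀ n z, 0 < survivalProb K n z)
    (hyag : ∀ x y, Tendsto (fun n => Kpow K n x y / survivalProb K n x) atTop (𝓝 (π x y)))
    (hJR : ∀ y, Tendsto (fun n => survivalProb K n y / survivalProb K n x₀) atTop (𝓝 (h y)))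
    (hratio : Tendsto (fun n => survivalProb K (n + 1) x₀ / survivalProb K n x₀) atTop (𝓝 ρ))
    {u v x y : S} (hx : h x ≠ 0) (hxy : π x y ≠ 0) (k : ℕ) :
    Tendsto (fun n => Kpow K (n + k) u v / Kpow K n x y) atTop
      (𝓝 (ρ ^ k * (h u * π u v) / (h x * π x y))) := by
  have hshift {f : ℕ → ℝ} {a : ℝ} (hf : Tendsto f atTop (𝓝 a)) :
      Tendsto (fun n => f (n + k)) atTop (𝓝 a) := hf.comp (tendsto_add_atTop_nat k)
  have hprod := ((((hshift (hyag u v)).mul (hshift (hJR u))).mul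
    (tendsto_add_div_of_tendsto_succ_div (fun n => (hσ n x₀).ne') hratio k)).mul
    ((hJR x).inv₀ hx)).mul ((hyag x y).inv₀ hxy)
  convert hprod using 1
  · ext n
    field_simp [(hσ n x).ne', (hσ n x₀).ne', (hσ (n + k) u).ne', (hσ (n + k) x₀).ne']
  · field_simp

end Kernel

theorem generalized_strong_ratio_limit_general {S : Type*} (K : S → S → ℝ)
    (hnn : ∀ x y, 0 ≤ K x y)
    (hsub : ∀ x, ∑' y, K x y ≤ 1)
    (hirr : ∀ x y : S, ∃ n, 0 < Kpow K n x y)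
    (ρ : ℝ) (hρpos : 0 < ρ)
    (hρ : ∀ x y : S,
      Tendsto (fun n : ℕ => (Kpow K n x y) ^ ((n : ℝ)⁻¹)) atTop (𝓝 ρ))
    (π : S → S → ℝ) (hπnn : ∀ x y, 0 ≤ π x y) (hπ1 : ∀ x, ∑' y, π x y = 1)
    (hyag : ∀ x y : S,
      Tendsto (fun n : ℕ => Kpow K n x y / ∑' z, Kpow K n x z) atTop (𝓝 (π x y)))
    (x₀ : S) (hhat : S → ℝ)
    (hJR : ∀ y : S,
      Tendsto (fun n : ℕ => (∑' z, Kpow K n y z) / (∑' z, Kpow K n x₀ z))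
        atTop (𝓝 (hhat y))) :
    ∀ (u v x y : S) (m : ℤ),
      Tendsto (fun n : ℕ => Kpow K ((n : ℤ) + m).toNat u v / Kpow K n x y)
        atTop (𝓝 (ρ ^ m * (hhat u * π u v) / (hhat x * π x y))) := by
  have hπsupp : ∀ x, ∃ y, 0 < π x y := fun x =>
    exists_pos_of_tsum_pos (hπnn x) ((hπ1 x).symm ▸ one_pos)
  have hroot : ∀ x, Tendsto (fun n : ℕ => survivalProb K n x ^ (n : ℝ)⁻¹) atTop (𝓝 ρ) := fun x =>
    let ⟨y, hy⟩ := hπsupp x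
    tendsto_survivalProb_rpow_inv hnn hy (hyag x y) (hρ x y)
  have hσev : ∀ x, ∀ᶠ n in atTop, 0 < survivalProb K n x := fun x =>
    let ⟨y, hy⟩ := hπsupp x
    (eventually_pos_of_tendsto_Kpow_div hnn hy.ne' (hyag x y)).mono fun _ h => h.2
  have hsubinv : ∀ x, IsSubinvariant K ρ (π x) := fun x =>
    isSubinvariant_of_tendsto_Kpow_div hnn (hσev x) (hroot x)
      (fun y => eventually_pos_of_tendsto_rpow_inv (Kpow_nonneg hnn · x y) hρpos (hρ x y))
      (hyag x)
  have hπpos : ∀ x y, 0 < π x y := fun x y =>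
    let ⟨y₀, hy₀⟩ := hπsupp x
    let ⟨_, hn⟩ := hirr y₀ y
    (hsubinv x).pos_of_Kpow_pos hnn hρpos hy₀ hn
  have hK : IsSubstochastic K := ⟨hnn, fun v => (hsubinv x₀).summable hnn hρpos.le (hπnn x₀)
    (summable_of_tsum_ne_zero ((hπ1 x₀).symm ▸ one_ne_zero)) (hπpos x₀ v), hsub⟩
  have hσ : ∀ n x, 0 < survivalProb K n x := fun n x => hK.survivalProb_pos (hσev x) n
  have hratio := hK.tendsto_survivalProb_succ_div (hσ · x₀) (hroot x₀) (hπnn x₀) (hπ1 x₀)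
    (hyag x₀) (hπpos x₀ x₀)
  have hhat_pos : ∀ x, 0 < hhat x := fun x =>
    let ⟨k, hk⟩ := hirr x x₀
    hk.trans_le (hK.Kpow_le_of_tendsto_survivalProb_div (hσ · x₀) (hJR x) k)
  intro u v x y m
  exact tendsto_toNat_add_div (F := fun n p => Kpow K n p.1 p.2)
    (L := fun p => hhat p.1 * π p.1 p.2) hρpos (fun p => mul_pos (hhat_pos p.1) (hπpos p.1 p.2))
    (fun p q k => tendsto_Kpow_add_div_Kpow hσ hyag hJR hratio (hhat_pos q.1).ne'
      (hπpos q.1 q.2).ne' k) (u, v) (x, y) m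

/-- The generalized strong ratio limit property: for all states `u,v,x,y` and
integers `m`, `K^{n+m}(u,v)/K^n(x,y) → R^{-m} ĥ(u)π_u(v)/(ĥ(x)π_x(y))`, where
`R^{-m} = ρ^m`. -/
theorem generalized_strong_ratio_limit {S : Type*} [Countable S] (K : S → S → ℝ)
    (hnn : ∀ x y, 0 ≤ K x y)
    (hsub : ∀ x, ∑' y, K x y ≤ 1)
    (hirr : ∀ x y : S, ∃ n, 0 < Kpow K n x y)
    (haper : ∀ x : S, ∀ m : ℕ, (∀ n, 0 < n → 0 < Kpow K n x x → m ∣ n) → m = 1)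
    (ρ : ℝ) (hρpos : 0 < ρ) (hρle : ρ ≤ 1)
    (hρ : ∀ x y : S,
      Tendsto (fun n : ℕ => (Kpow K n x y) ^ ((n : ℝ)⁻¹)) atTop (𝓝 ρ))
    (π : S → S → ℝ) (hπnn : ∀ x y, 0 ≤ π x y) (hπ1 : ∀ x, ∑' y, π x y = 1)
    (hyag : ∀ x y : S,
      Tendsto (fun n : ℕ => Kpow K n x y / ∑' z, Kpow K n x z) atTop (𝓝 (π x y)))
    (x₀ : S) (hhat : S → ℝ) (hhat₀ : hhat x₀ = 1)
    (hJR : ∀ y : S,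
      Tendsto (fun n : ℕ => (∑' z, Kpow K n y z) / (∑' z, Kpow K n x₀ z))
        atTop (𝓝 (hhat y))) :
    ∀ (u v x y : S) (m : ℤ),
      Tendsto (fun n : ℕ => Kpow K ((n : ℤ) + m).toNat u v / Kpow K n x y)
        atTop (𝓝 (ρ ^ m * (hhat u * π u v) / (hhat x * π x y))) :=
  generalized_strong_ratio_limit_general K hnn hsub hirr ρ hρpos hρ π hπnn hπ1 hyag x₀ hhat hJR
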